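/- Let R be a commutative ring, I ⊆ R an ideal, and p ≥ 1 an integer. Let T ⊆ M_p(R) be the set of p×p matrices (a_{ij}) with a_{ij} ∈ R for i ≥ j and a_{ij} ∈ I for i < j, and let J ⊆ M_p(R) be the set of p×p matrices (a_{ij}) with a_{ij} ∈ R for i > j and a_{ij} ∈ I for i ≤ j. Then T is a subring of M_p(R), J is a two-sided ideal of T, and the p-th power ideal J^p (the additive subgroup generated by products of p elements of J) equals I·T, i.e. the set of matrices (a_{ij}) with a_{ij} ∈ I for i ≥ j and a_{ij} ∈ I² for i < j. -/

import Mathlib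

/-!
Let `F n` be the set of matrices whose `(i, j)` entry lies in `I ^ ⌈(n + j - i) / p⌉`. The
exponent is subadditive along a matrix product, so `F a * F b ⊆ F (a + b)`; moreover `T = F 0`,
`J = F 1` and `I·T = F p`, whence `J ^ p ⊆ I·T`. Conversely, let `N` be the subdiagonal shift,
an element of `J`, and `E_ab(c)` the elementary matrices. For `j ≤ i` and `c ∈ I`,
`E_ij(c) = N^i E_0m(c) N^(p-1-i)` with `m = j + p - 1 - i`, and for `i < j` and `x, y ∈ I`,
`E_ij(xy) = N^i E_0,p-1(x) N^(p-2-i) E_i+1,j(y)`; both are products of `p` elements of `J`.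
-/

open Matrix
open scoped Pointwise

theorem Set.setOf_exists_list_prod_eq_pow {M : Type*} [Monoid M] (S : Set M) (n : ℕ) :
    {m | ∃ l : List M, l.length = n ∧ (∀ x ∈ l, x ∈ S) ∧ m = l.prod} = S ^ n := by
  induction n with
  | zero => ext m; simp
  | succ n ih =>
    ext m
    rw [pow_succ', Set.mem_mul, ← ih]
    constructor
    · rintro ⟨l, hlen, hl, rfl⟩
      obtain ⟨x, l, rfl⟩ := List.exists_cons_of_length_eq_add_one hlen
      exact ⟨x, hl x List.mem_cons_self, l.prod, ⟨l, by simpa using hlen,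
        fun y hy => hl y (List.mem_cons_of_mem x hy), rfl⟩, List.prod_cons.symm⟩
    · rintro ⟨x, hx, _, ⟨l, hlen, hl, rfl⟩, rfl⟩
      exact ⟨x :: l, by simp [hlen], by simpa using ⟨hx, hl⟩, List.prod_cons⟩

namespace GeigleLenzing

variable {R : Type*} [CommRing R] (I : Ideal R) (p : ℕ)

/-- `⌈(n + j - i) / p⌉`, the power of `I` allowed in entry `(i, j)` of `J ^ n` (the natural
subtraction does not truncate, as `i < p`). -/
def filtrationExp (n : ℕ) (i j : Fin p) : ℕ := (n + (p - 1) + j - i) / p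

variable {p} in
theorem filtrationExp_add_le (a b : ℕ) (i k j : Fin p) :
    filtrationExp p (a + b) i j ≤ filtrationExp p a i k + filtrationExp p b k j := by
  have hp : 0 < p := i.pos
  have hA := Nat.lt_mul_div_succ (a + (p - 1) + k - i) hp
  have hB := Nat.lt_mul_div_succ (b + (p - 1) + j - k) hp
  rw [filtrationExp, Nat.div_le_iff_le_mul_add_pred hp]
  simp only [filtrationExp, mul_add, mul_one] at hA hB ⊢
  omega

def filtration (n : ℕ) : AddSubgroup (Matrix (Fin p) (Fin p) R) where
  carrier := {m | ∀ i j, m i j ∈ I ^ filtrationExp p n i j}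
  zero_mem' _ _ := zero_mem _
  add_mem' ha hb i j := add_mem (ha i j) (hb i j)
  neg_mem' ha i j := neg_mem (ha i j)

variable {I p}

theorem mem_filtration {n : ℕ} {m : Matrix (Fin p) (Fin p) R} :
    m ∈ filtration I p n ↔ ∀ i j, m i j ∈ I ^ filtrationExp p n i j := Iff.rfl

theorem mul_mem_filtration {a b : ℕ} {x y : Matrix (Fin p) (Fin p) R}
    (hx : x ∈ filtration I p a) (hy : y ∈ filtration I p b) :
    x * y ∈ filtration I p (a + b) := fun i j => by
  rw [mul_apply]
  refine Ideal.sum_mem _ fun k _ => Ideal.pow_le_pow_right (filtrationExp_add_le a b i k j) ?_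
  rw [pow_add]
  exact Ideal.mul_mem_mul (hx i k) (hy k j)

theorem filtrationExp_zero (i j : Fin p) : filtrationExp p 0 i j = if i < j then 1 else 0 := by
  have := i.isLt
  have := j.isLt
  rw [filtrationExp]
  split_ifs
  · exact Nat.div_eq_of_lt_le (by omega) (by omega)
  · exact Nat.div_eq_of_lt (by omega)

theorem filtrationExp_one (i j : Fin p) : filtrationExp p 1 i j = if i ≤ j then 1 else 0 := by
  have := i.isLt
  have := j.isLt
  rw [filtrationExp]
  split_ifs
  · exact Nat.div_eq_of_lt_le (by omega) (by omega)
  · exact Nat.div_eq_of_lt (by omega)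

theorem filtrationExp_self (i j : Fin p) : filtrationExp p p i j = if i < j then 2 else 1 := by
  have := i.isLt
  have := j.isLt
  rw [filtrationExp]
  split_ifs <;> exact Nat.div_eq_of_lt_le (by omega) (by omega)

theorem one_mem_filtration_zero : (1 : Matrix (Fin p) (Fin p) R) ∈ filtration I p 0 := by
  intro i j
  rcases eq_or_ne i j with rfl | hij
  · simp [filtrationExp_zero]
  · simp [one_apply_ne hij]

theorem pow_subset_filtration (n : ℕ) :
    (filtration I p 1 : Set (Matrix (Fin p) (Fin p) R)) ^ n ⊆ filtration I p n := by
  induction n with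
  | zero => simpa using one_mem_filtration_zero
  | succ n ih =>
    rw [pow_succ, Set.mul_subset_iff]
    exact fun x hx y hy => mul_mem_filtration (ih hx) hy

theorem mem_filtration_zero_iff {m : Matrix (Fin p) (Fin p) R} :
    m ∈ filtration I p 0 ↔ ∀ i j, i < j → m i j ∈ I := by
  refine forall₂_congr fun i j => ?_
  rw [filtrationExp_zero]
  split_ifs with h <;> simp [h]

theorem mem_filtration_one_iff {m : Matrix (Fin p) (Fin p) R} :
    m ∈ filtration I p 1 ↔ ∀ i j, i ≤ j → m i j ∈ I := by
  refine forall₂_congr fun i j => ?_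
  rw [filtrationExp_one]
  split_ifs with h <;> simp [h]

theorem mem_filtration_self_iff {m : Matrix (Fin p) (Fin p) R} :
    m ∈ filtration I p p ↔
      (∀ i j, j ≤ i → m i j ∈ I) ∧ (∀ i j, i < j → m i j ∈ I ^ 2) := by
  simp only [mem_filtration, filtrationExp_self]
  constructor
  · intro h
    exact ⟨fun i j hji => by simpa [not_lt.2 hji] using h i j,
      fun i j hij => by simpa [hij] using h i j⟩
  · rintro ⟨hle, hlt⟩ i j
    split_ifs with h
    · exact hlt i j h
    · simpa using hle i j (not_lt.1 h)

theorem filtration_one_le_zero : filtration I p 1 ≤ filtration I p 0 := fun _ hm =>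
  mem_filtration_zero_iff.2 fun i j hij => mem_filtration_one_iff.1 hm i j hij.le

variable (I p) in
def order : Subring (Matrix (Fin p) (Fin p) R) :=
  { filtration I p 0 with
    one_mem' := one_mem_filtration_zero
    mul_mem' := mul_mem_filtration }

variable (R p) in
def shiftDown : Matrix (Fin p) (Fin p) R := of fun a b => if (a : ℕ) = b + 1 then 1 else 0

theorem shiftDown_pow_apply (n : ℕ) (x y : Fin p) :
    (shiftDown R p ^ n) x y = if (x : ℕ) = y + n then 1 else 0 := by
  induction n generalizing y with
  | zero => simp [one_apply, Fin.ext_iff]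
  | succ n ih =>
    simp only [pow_succ, mul_apply, ih]
    simp only [shiftDown, of_apply, mul_ite, mul_one, mul_zero]
    rw [Fin.sum_univ_eq_sum_range
      (fun z => if z = (y : ℕ) + 1 then if (x : ℕ) = z + n then (1 : R) else 0 else 0),
      Finset.sum_ite_eq']
    have := x.isLt
    split_ifs with h <;> simp only [Finset.mem_range] at h <;> first | rfl | omega

theorem shiftDown_mem_filtration_one : shiftDown R p ∈ filtration I p 1 :=
  mem_filtration_one_iff.2 fun i j hij => by
    rw [shiftDown, of_apply, if_neg (by omega)]
    exact zero_mem I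

theorem shiftDown_pow_mul_single {n : ℕ} {r x : Fin p} (h : (x : ℕ) = r + n) (s : Fin p)
    (c : R) :
    shiftDown R p ^ n * single r s c = single x s c := by
  ext u v
  rcases eq_or_ne v s with rfl | hv
  · simp [shiftDown_pow_apply, single_apply, Fin.ext_iff, h, eq_comm]
  · simp [hv, Ne.symm hv]

theorem single_mul_shiftDown_pow {n : ℕ} {s y : Fin p} (h : (s : ℕ) = y + n) (r : Fin p)
    (c : R) :
    single r s c * shiftDown R p ^ n = single r y c := by
  ext u v
  rcases eq_or_ne u r with rfl | hu
  · simp [shiftDown_pow_apply, single_apply, Fin.ext_iff, h]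
  · simp [hu, Ne.symm hu]

theorem single_mem_filtration_one (i j : Fin p) {c : R} (hc : c ∈ I) :
    single i j c ∈ filtration I p 1 :=
  mem_filtration_one_iff.2 fun a b _ => by
    rw [single_apply]
    split_ifs
    exacts [hc, zero_mem I]

theorem single_mem_pow_of_le {i j : Fin p} (hji : j ≤ i) {c : R} (hc : c ∈ I) :
    single i j c ∈ (filtration I p 1 : Set (Matrix (Fin p) (Fin p) R)) ^ p := by
  have hi := i.isLt
  let m : Fin p := ⟨j + (p - 1 - i), by omega⟩
  have hfactor : single i j c =
      shiftDown R p ^ (i : ℕ) * single ⟨0, by omega⟩ m c * shiftDown R p ^ (p - 1 - i) := by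
    rw [shiftDown_pow_mul_single (x := i) (zero_add _).symm, single_mul_shiftDown_pow rfl]
  have hexp : p = i + 1 + (p - 1 - i) := by omega
  rw [hfactor, congrArg (_ ^ ·) hexp, pow_add, pow_succ]
  exact Set.mul_mem_mul (Set.mul_mem_mul (Set.pow_mem_pow shiftDown_mem_filtration_one)
    (single_mem_filtration_one _ _ hc)) (Set.pow_mem_pow shiftDown_mem_filtration_one)

theorem single_mem_closure_pow_of_lt {i j : Fin p} (hij : i < j) {c : R} (hc : c ∈ I ^ 2) :
    single i j c ∈ AddSubgroup.closure
      ((filtration I p 1 : Set (Matrix (Fin p) (Fin p) R)) ^ p) := by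
  have hi := i.isLt
  have hj := j.isLt
  rw [pow_two] at hc
  refine Submodule.mul_induction_on hc (fun x hx y hy => AddSubgroup.subset_closure ?_)
    fun _ _ => by rw [single_add]; exact add_mem
  have hfactor : single i j (x * y) =
      shiftDown R p ^ (i : ℕ) * single ⟨0, by omega⟩ ⟨p - 1, by omega⟩ x *
        shiftDown R p ^ (p - 2 - i) * single ⟨i + 1, by omega⟩ j y := by
    rw [shiftDown_pow_mul_single (x := i) (zero_add _).symm,
      single_mul_shiftDown_pow (y := ⟨i + 1, by omega⟩) (by dsimp only; omega),
      single_mul_single_same]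
  have hexp : p = i + 1 + (p - 2 - i) + 1 := by omega
  rw [hfactor, congrArg (_ ^ ·) hexp, pow_succ, pow_add, pow_succ]
  exact Set.mul_mem_mul (Set.mul_mem_mul (Set.mul_mem_mul
    (Set.pow_mem_pow shiftDown_mem_filtration_one) (single_mem_filtration_one _ _ hx))
    (Set.pow_mem_pow shiftDown_mem_filtration_one)) (single_mem_filtration_one _ _ hy)

theorem closure_pow_filtration_one :
    AddSubgroup.closure ((filtration I p 1 : Set (Matrix (Fin p) (Fin p) R)) ^ p) =
      filtration I p p := by
  refine le_antisymm ((AddSubgroup.closure_le _).2 (pow_subset_filtration p)) fun m hm => ?_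
  obtain ⟨hle, hlt⟩ := mem_filtration_self_iff.1 hm
  rw [matrix_eq_sum_single m]
  refine sum_mem fun i _ => sum_mem fun j _ => ?_
  rcases le_or_gt j i with h | h
  · exact AddSubgroup.subset_closure (single_mem_pow_of_le h (hle i j h))
  · exact single_mem_closure_pow_of_lt h (hlt i j h)

end GeigleLenzing

open GeigleLenzing

theorem GL_order_ideal_power_general (R : Type*) [CommRing R] (I : Ideal R) (p : ℕ)
    (T J : Set (Matrix (Fin p) (Fin p) R))
    (hT : T = {m : Matrix (Fin p) (Fin p) R | ∀ i j : Fin p, i < j → m i j ∈ I})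
    (hJ : J = {m : Matrix (Fin p) (Fin p) R | ∀ i j : Fin p, i ≤ j → m i j ∈ I}) :
    (∃ S : Subring (Matrix (Fin p) (Fin p) R), (S : Set (Matrix (Fin p) (Fin p) R)) = T) ∧
    (J ⊆ T ∧ (0 : Matrix (Fin p) (Fin p) R) ∈ J ∧
      (∀ a b, a ∈ J → b ∈ J → a + b ∈ J) ∧ (∀ a, a ∈ J → -a ∈ J) ∧
      (∀ t a, t ∈ T → a ∈ J → t * a ∈ J ∧ a * t ∈ J)) ∧
    (AddSubgroup.closure {m : Matrix (Fin p) (Fin p) R |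
        ∃ l : List (Matrix (Fin p) (Fin p) R), l.length = p ∧ (∀ x ∈ l, x ∈ J) ∧ m = l.prod} :
      Set (Matrix (Fin p) (Fin p) R)) =
      {m : Matrix (Fin p) (Fin p) R |
        (∀ i j : Fin p, j ≤ i → m i j ∈ I) ∧ (∀ i j : Fin p, i < j → m i j ∈ I ^ 2)} := by
  obtain rfl : T = filtration I p 0 := hT ▸ Set.ext fun _ => mem_filtration_zero_iff.symm
  obtain rfl : J = filtration I p 1 := hJ ▸ Set.ext fun _ => mem_filtration_one_iff.symm
  refine ⟨⟨order I p, rfl⟩, ⟨filtration_one_le_zero, zero_mem _, fun _ _ => add_mem,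
    fun _ => neg_mem, fun _ _ ht ha => ⟨?_, ?_⟩⟩, ?_⟩
  · simpa using mul_mem_filtration ht ha
  · simpa using mul_mem_filtration ha ht
  · rw [Set.setOf_exists_list_prod_eq_pow, closure_pow_filtration_one]
    exact Set.ext fun _ => mem_filtration_self_iff

/-- Affine-local form of the identity `J^p = T ⊗ O(-D)` for the triangular
Geigle-Lenzing order: `T` (matrices with entries in `R` on/below the diagonal and in `I`
above) is a subring of `M_p(R)`, `J` (matrices with entries in `I` on/above the diagonal
and in `R` below) is a two-sided ideal of `T`, and the additive subgroup generated by
products of `p` elements of `J` is the set of matrices with entries in `I` on/below the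
diagonal and in `I²` above. -/
theorem GL_order_ideal_power (R : Type*) [CommRing R] (I : Ideal R) (p : ℕ) (hp : 1 ≤ p)
    (T J : Set (Matrix (Fin p) (Fin p) R))
    (hT : T = {m : Matrix (Fin p) (Fin p) R | ∀ i j : Fin p, i < j → m i j ∈ I})
    (hJ : J = {m : Matrix (Fin p) (Fin p) R | ∀ i j : Fin p, i ≤ j → m i j ∈ I}) :
    (∃ S : Subring (Matrix (Fin p) (Fin p) R), (S : Set (Matrix (Fin p) (Fin p) R)) = T) ∧
    (J ⊆ T ∧ (0 : Matrix (Fin p) (Fin p) R) ∈ J ∧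
      (∀ a b, a ∈ J → b ∈ J → a + b ∈ J) ∧ (∀ a, a ∈ J → -a ∈ J) ∧
      (∀ t a, t ∈ T → a ∈ J → t * a ∈ J ∧ a * t ∈ J)) ∧
    (AddSubgroup.closure {m : Matrix (Fin p) (Fin p) R |
        ∃ l : List (Matrix (Fin p) (Fin p) R), l.length = p ∧ (∀ x ∈ l, x ∈ J) ∧ m = l.prod} :
      Set (Matrix (Fin p) (Fin p) R)) =
      {m : Matrix (Fin p) (Fin p) R |
        (∀ i j : Fin p, j ≤ i → m i j ∈ I) ∧ (∀ i j : Fin p, i < j → m i j ∈ I ^ 2)} :=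
  GL_order_ideal_power_general R I p T J hT hJ
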